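/- Let a₁, a₂, a₃ be nonzero reals with a₁ + a₂ + a₃ = 0 and b₂, b₄, b₅ be nonzero reals with b₂ + b₄ + b₅ = 0. Let A be the 5×5 matrix [[a₁², −a₁a₂, −a₁a₃, −a₁a₃, 0],[−a₁a₂, a₂², −a₂a₃, −a₂a₃, 0],[−a₁a₃, −a₂a₃, a₃², a₃², 0],[−a₁a₃, −a₂a₃, a₃², a₃², 0],[0,0,0,0,0]] and B the 5×5 matrix [[0,0,0,0,0],[0, b₂², b₂², −b₂b₄, −b₂b₅],[0, b₂², b₂², −b₂b₄, −b₂b₅],[0, −b₂b₄, −b₂b₄, b₄², −b₄b₅],[0, −b₂b₅, −b₂b₅, −b₄b₅, b₅²]]. Then for every t > 0, det(tA + (1/t)B) = −16a₁²a₂a₃b₂b₄b₅²(a₂a₃t + b₂b₄/t). In particular det(tA + (1/t)B) is nonzero for every t > 0 with t² ≠ −b₂b₄/(a₂a₃), and t ↦ det(tA + (1/t)B) is not constant on (0,∞). -/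
import Mathlib
open Matrix in
section
variable {R : Type*} [CommRing R]
private lemma sa4_0_0 : (((0:Fin 4)).succAbove (0:Fin 3)) = 1 := by decide
private lemma sa4_0_1 : (((0:Fin 4)).succAbove (1:Fin 3)) = 2 := by decide
private lemma sa4_0_2 : (((0:Fin 4)).succAbove (2:Fin 3)) = 3 := by decide
private lemma sa4_1_0 : (((1:Fin 4)).succAbove (0:Fin 3)) = 0 := by decide
private lemma sa4_1_1 : (((1:Fin 4)).succAbove (1:Fin 3)) = 2 := by decide
private lemma sa4_1_2 : (((1:Fin 4)).succAbove (2:Fin 3)) = 3 := by decide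
private lemma sa4_2_0 : (((2:Fin 4)).succAbove (0:Fin 3)) = 0 := by decide
private lemma sa4_2_1 : (((2:Fin 4)).succAbove (1:Fin 3)) = 1 := by decide
private lemma sa4_2_2 : (((2:Fin 4)).succAbove (2:Fin 3)) = 3 := by decide
private lemma sa4_3_0 : (((3:Fin 4)).succAbove (0:Fin 3)) = 0 := by decide
private lemma sa4_3_1 : (((3:Fin 4)).succAbove (1:Fin 3)) = 1 := by decide
private lemma sa4_3_2 : (((3:Fin 4)).succAbove (2:Fin 3)) = 2 := by decide
private lemma sc4_0 : (((0:Fin 3)).succ) = (1:Fin 4) := by decide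
private lemma sc4_1 : (((1:Fin 3)).succ) = (2:Fin 4) := by decide
private lemma sc4_2 : (((2:Fin 3)).succ) = (3:Fin 4) := by decide
private lemma v4_0 : (((0:Fin 4):ℕ)) = 0 := by decide
private lemma v4_1 : (((1:Fin 4):ℕ)) = 1 := by decide
private lemma v4_2 : (((2:Fin 4):ℕ)) = 2 := by decide
private lemma v4_3 : (((3:Fin 4):ℕ)) = 3 := by decide
private lemma sa5_0_0 : (((0:Fin 5)).succAbove (0:Fin 4)) = 1 := by decide
private lemma sa5_0_1 : (((0:Fin 5)).succAbove (1:Fin 4)) = 2 := by decide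
private lemma sa5_0_2 : (((0:Fin 5)).succAbove (2:Fin 4)) = 3 := by decide
private lemma sa5_0_3 : (((0:Fin 5)).succAbove (3:Fin 4)) = 4 := by decide
private lemma sa5_1_0 : (((1:Fin 5)).succAbove (0:Fin 4)) = 0 := by decide
private lemma sa5_1_1 : (((1:Fin 5)).succAbove (1:Fin 4)) = 2 := by decide
private lemma sa5_1_2 : (((1:Fin 5)).succAbove (2:Fin 4)) = 3 := by decide
private lemma sa5_1_3 : (((1:Fin 5)).succAbove (3:Fin 4)) = 4 := by decide
private lemma sa5_2_0 : (((2:Fin 5)).succAbove (0:Fin 4)) = 0 := by decide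
private lemma sa5_2_1 : (((2:Fin 5)).succAbove (1:Fin 4)) = 1 := by decide
private lemma sa5_2_2 : (((2:Fin 5)).succAbove (2:Fin 4)) = 3 := by decide
private lemma sa5_2_3 : (((2:Fin 5)).succAbove (3:Fin 4)) = 4 := by decide
private lemma sa5_3_0 : (((3:Fin 5)).succAbove (0:Fin 4)) = 0 := by decide
private lemma sa5_3_1 : (((3:Fin 5)).succAbove (1:Fin 4)) = 1 := by decide
private lemma sa5_3_2 : (((3:Fin 5)).succAbove (2:Fin 4)) = 2 := by decide
private lemma sa5_3_3 : (((3:Fin 5)).succAbove (3:Fin 4)) = 4 := by decide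
private lemma sa5_4_0 : (((4:Fin 5)).succAbove (0:Fin 4)) = 0 := by decide
private lemma sa5_4_1 : (((4:Fin 5)).succAbove (1:Fin 4)) = 1 := by decide
private lemma sa5_4_2 : (((4:Fin 5)).succAbove (2:Fin 4)) = 2 := by decide
private lemma sa5_4_3 : (((4:Fin 5)).succAbove (3:Fin 4)) = 3 := by decide
private lemma sc5_0 : (((0:Fin 4)).succ) = (1:Fin 5) := by decide
private lemma sc5_1 : (((1:Fin 4)).succ) = (2:Fin 5) := by decide
private lemma sc5_2 : (((2:Fin 4)).succ) = (3:Fin 5) := by decide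
private lemma sc5_3 : (((3:Fin 4)).succ) = (4:Fin 5) := by decide
private lemma v5_0 : (((0:Fin 5):ℕ)) = 0 := by decide
private lemma v5_1 : (((1:Fin 5):ℕ)) = 1 := by decide
private lemma v5_2 : (((2:Fin 5):ℕ)) = 2 := by decide
private lemma v5_3 : (((3:Fin 5):ℕ)) = 3 := by decide
private lemma v5_4 : (((4:Fin 5):ℕ)) = 4 := by decide
private theorem det_fin_four' (M : Matrix (Fin 4) (Fin 4) R) :
    M.det = 0 + M 0 0 * M 1 1 * M 2 2 * M 3 3 - M 0 0 * M 1 1 * M 2 3 * M 3 2 - M 0 0 * M 1 2 * M 2 1 * M 3 3 + M 0 0 * M 1 2 * M 2 3 * M 3 1 + M 0 0 * M 1 3 * M 2 1 * M 3 2 - M 0 0 * M 1 3 * M 2 2 * M 3 1 - M 0 1 * M 1 0 * M 2 2 * M 3 3 + M 0 1 * M 1 0 * M 2 3 * M 3 2 + M 0 1 * M 1 2 * M 2 0 * M 3 3 - M 0 1 * M 1 2 * M 2 3 * M 3 0 - M 0 1 * M 1 3 * M 2 0 * M 3 2 + M 0 1 * M 1 3 * M 2 2 * M 3 0 + M 0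 2 * M 1 0 * M 2 1 * M 3 3 - M 0 2 * M 1 0 * M 2 3 * M 3 1 - M 0 2 * M 1 1 * M 2 0 * M 3 3 + M 0 2 * M 1 1 * M 2 3 * M 3 0 + M 0 2 * M 1 3 * M 2 0 * M 3 1 - M 0 2 * M 1 3 * M 2 1 * M 3 0 - M 0 3 * M 1 0 * M 2 1 * M 3 2 + M 0 3 * M 1 0 * M 2 2 * M 3 1 + M 0 3 * M 1 1 * M 2 0 * M 3 2 - M 0 3 * M 1 1 * M 2 2 * M 3 0 - M 0 3 * M 1 2 * M 2 0 * M 3 1 + M 0 3 * M 1 2 * M 2 1 * M 3 0 := by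
  rw [det_succ_row_zero, Fin.sum_univ_four]
  simp only [det_fin_three, submatrix_apply, sa4_0_0, sa4_0_1, sa4_0_2, sa4_1_0, sa4_1_1, sa4_1_2, sa4_2_0, sa4_2_1, sa4_2_2, sa4_3_0, sa4_3_1, sa4_3_2, sc4_0, sc4_1, sc4_2, v4_0, v4_1, v4_2, v4_3]
  ring
private theorem det_fin_five' (M : Matrix (Fin 5) (Fin 5) R) :
    M.det = 0 + M 0 0 * M 1 1 * M 2 2 * M 3 3 * M 4 4 - M 0 0 * M 1 1 * M 2 2 * M 3 4 * M 4 3 - M 0 0 * M 1 1 * M 2 3 * M 3 2 * M 4 4 + M 0 0 * M 1 1 * M 2 3 * M 3 4 * M 4 2 + M 0 0 * M 1 1 * M 2 4 * M 3 2 * M 4 3 - M 0 0 * M 1 1 * M 2 4 * M 3 3 * M 4 2 - M 0 0 * M 1 2 * M 2 1 * M 3 3 * M 4 4 + M 0 0 * M 1 2 * M 2 1 * M 3 4 * M 4 3 + M 0 0 * M 1 2 * M 2 3 * M 3 1 * M 4 4 - M 0 0 * M 1 2 * M 2 3 * M 3 4 * M 4 1 - M 0 0 * M 1 2 * M 2 4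 * M 3 1 * M 4 3 + M 0 0 * M 1 2 * M 2 4 * M 3 3 * M 4 1 + M 0 0 * M 1 3 * M 2 1 * M 3 2 * M 4 4 - M 0 0 * M 1 3 * M 2 1 * M 3 4 * M 4 2 - M 0 0 * M 1 3 * M 2 2 * M 3 1 * M 4 4 + M 0 0 * M 1 3 * M 2 2 * M 3 4 * M 4 1 + M 0 0 * M 1 3 * M 2 4 * M 3 1 * M 4 2 - M 0 0 * M 1 3 * M 2 4 * M 3 2 * M 4 1 - M 0 0 * M 1 4 * M 2 1 * M 3 2 * M 4 3 + M 0 0 * M 1 4 * M 2 1 * M 3 3 * M 4 2 + M 0 0 * M 1 4 * M 2 2 * M 3 1 * M 4 3 - M 0 0 * M 1 4 * M 2 2 * M 3 3 * M 4 1 - M 0 0 * M 1 4 * M 2 3 * M 3 1 * M 4 2 + M 0 0 * M 1 4 * M 2 3 * M 3 2 * M 4 1 - M 0 1 * M 1 0 * M 2 2 * M 3 3 * M 4 4 + M 0 1 * M 1 0 * M 2 2 * M 3 4 * M 4 3 + M 0 1 * M 1 0 * M 2 3 * M 3 2 * M 4 4 - M 0 1 * M 1 0 * M 2 3 * M 3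 4 * M 4 2 - M 0 1 * M 1 0 * M 2 4 * M 3 2 * M 4 3 + M 0 1 * M 1 0 * M 2 4 * M 3 3 * M 4 2 + M 0 1 * M 1 2 * M 2 0 * M 3 3 * M 4 4 - M 0 1 * M 1 2 * M 2 0 * M 3 4 * M 4 3 - M 0 1 * M 1 2 * M 2 3 * M 3 0 * M 4 4 + M 0 1 * M 1 2 * M 2 3 * M 3 4 * M 4 0 + M 0 1 * M 1 2 * M 2 4 * M 3 0 * M 4 3 - M 0 1 * M 1 2 * M 2 4 * M 3 3 * M 4 0 - M 0 1 * M 1 3 * M 2 0 * M 3 2 * M 4 4 + M 0 1 * M 1 3 * M 2 0 * M 3 4 * M 4 2 + M 0 1 * M 1 3 * M 2 2 * M 3 0 * M 4 4 - M 0 1 * M 1 3 * M 2 2 * M 3 4 * M 4 0 - M 0 1 * M 1 3 * M 2 4 * M 3 0 * M 4 2 + M 0 1 * M 1 3 * M 2 4 * M 3 2 * M 4 0 + M 0 1 * M 1 4 * M 2 0 * M 3 2 * M 4 3 - M 0 1 * M 1 4 * M 2 0 * M 3 3 * M 4 2 - M 0 1 * M 1 4 * M 2 2 * M 3 0 * M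 4 3 + M 0 1 * M 1 4 * M 2 2 * M 3 3 * M 4 0 + M 0 1 * M 1 4 * M 2 3 * M 3 0 * M 4 2 - M 0 1 * M 1 4 * M 2 3 * M 3 2 * M 4 0 + M 0 2 * M 1 0 * M 2 1 * M 3 3 * M 4 4 - M 0 2 * M 1 0 * M 2 1 * M 3 4 * M 4 3 - M 0 2 * M 1 0 * M 2 3 * M 3 1 * M 4 4 + M 0 2 * M 1 0 * M 2 3 * M 3 4 * M 4 1 + M 0 2 * M 1 0 * M 2 4 * M 3 1 * M 4 3 - M 0 2 * M 1 0 * M 2 4 * M 3 3 * M 4 1 - M 0 2 * M 1 1 * M 2 0 * M 3 3 * M 4 4 + M 0 2 * M 1 1 * M 2 0 * M 3 4 * M 4 3 + M 0 2 * M 1 1 * M 2 3 * M 3 0 * M 4 4 - M 0 2 * M 1 1 * M 2 3 * M 3 4 * M 4 0 - M 0 2 * M 1 1 * M 2 4 * M 3 0 * M 4 3 + M 0 2 * M 1 1 * M 2 4 * M 3 3 * M 4 0 + M 0 2 * M 1 3 * M 2 0 * M 3 1 * M 4 4 - M 0 2 * M 1 3 * M 2 0 * M 3 4 * M 4 1 -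 M 0 2 * M 1 3 * M 2 1 * M 3 0 * M 4 4 + M 0 2 * M 1 3 * M 2 1 * M 3 4 * M 4 0 + M 0 2 * M 1 3 * M 2 4 * M 3 0 * M 4 1 - M 0 2 * M 1 3 * M 2 4 * M 3 1 * M 4 0 - M 0 2 * M 1 4 * M 2 0 * M 3 1 * M 4 3 + M 0 2 * M 1 4 * M 2 0 * M 3 3 * M 4 1 + M 0 2 * M 1 4 * M 2 1 * M 3 0 * M 4 3 - M 0 2 * M 1 4 * M 2 1 * M 3 3 * M 4 0 - M 0 2 * M 1 4 * M 2 3 * M 3 0 * M 4 1 + M 0 2 * M 1 4 * M 2 3 * M 3 1 * M 4 0 - M 0 3 * M 1 0 * M 2 1 * M 3 2 * M 4 4 + M 0 3 * M 1 0 * M 2 1 * M 3 4 * M 4 2 + M 0 3 * M 1 0 * M 2 2 * M 3 1 * M 4 4 - M 0 3 * M 1 0 * M 2 2 * M 3 4 * M 4 1 - M 0 3 * M 1 0 * M 2 4 * M 3 1 * M 4 2 + M 0 3 * M 1 0 * M 2 4 * M 3 2 * M 4 1 + M 0 3 * M 1 1 * M 2 0 * M 3 2 * M 4 4 - M 0 3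 * M 1 1 * M 2 0 * M 3 4 * M 4 2 - M 0 3 * M 1 1 * M 2 2 * M 3 0 * M 4 4 + M 0 3 * M 1 1 * M 2 2 * M 3 4 * M 4 0 + M 0 3 * M 1 1 * M 2 4 * M 3 0 * M 4 2 - M 0 3 * M 1 1 * M 2 4 * M 3 2 * M 4 0 - M 0 3 * M 1 2 * M 2 0 * M 3 1 * M 4 4 + M 0 3 * M 1 2 * M 2 0 * M 3 4 * M 4 1 + M 0 3 * M 1 2 * M 2 1 * M 3 0 * M 4 4 - M 0 3 * M 1 2 * M 2 1 * M 3 4 * M 4 0 - M 0 3 * M 1 2 * M 2 4 * M 3 0 * M 4 1 + M 0 3 * M 1 2 * M 2 4 * M 3 1 * M 4 0 + M 0 3 * M 1 4 * M 2 0 * M 3 1 * M 4 2 - M 0 3 * M 1 4 * M 2 0 * M 3 2 * M 4 1 - M 0 3 * M 1 4 * M 2 1 * M 3 0 * M 4 2 + M 0 3 * M 1 4 * M 2 1 * M 3 2 * M 4 0 + M 0 3 * M 1 4 * M 2 2 * M 3 0 * M 4 1 - M 0 3 * M 1 4 * M 2 2 * M 3 1 * M 4 0 + M 0 4 * M 1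 0 * M 2 1 * M 3 2 * M 4 3 - M 0 4 * M 1 0 * M 2 1 * M 3 3 * M 4 2 - M 0 4 * M 1 0 * M 2 2 * M 3 1 * M 4 3 + M 0 4 * M 1 0 * M 2 2 * M 3 3 * M 4 1 + M 0 4 * M 1 0 * M 2 3 * M 3 1 * M 4 2 - M 0 4 * M 1 0 * M 2 3 * M 3 2 * M 4 1 - M 0 4 * M 1 1 * M 2 0 * M 3 2 * M 4 3 + M 0 4 * M 1 1 * M 2 0 * M 3 3 * M 4 2 + M 0 4 * M 1 1 * M 2 2 * M 3 0 * M 4 3 - M 0 4 * M 1 1 * M 2 2 * M 3 3 * M 4 0 - M 0 4 * M 1 1 * M 2 3 * M 3 0 * M 4 2 + M 0 4 * M 1 1 * M 2 3 * M 3 2 * M 4 0 + M 0 4 * M 1 2 * M 2 0 * M 3 1 * M 4 3 - M 0 4 * M 1 2 * M 2 0 * M 3 3 * M 4 1 - M 0 4 * M 1 2 * M 2 1 * M 3 0 * M 4 3 + M 0 4 * M 1 2 * M 2 1 * M 3 3 * M 4 0 + M 0 4 * M 1 2 * M 2 3 * M 3 0 * M 4 1 - M 0 4 * M 1 2 * M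 2 3 * M 3 1 * M 4 0 - M 0 4 * M 1 3 * M 2 0 * M 3 1 * M 4 2 + M 0 4 * M 1 3 * M 2 0 * M 3 2 * M 4 1 + M 0 4 * M 1 3 * M 2 1 * M 3 0 * M 4 2 - M 0 4 * M 1 3 * M 2 1 * M 3 2 * M 4 0 - M 0 4 * M 1 3 * M 2 2 * M 3 0 * M 4 1 + M 0 4 * M 1 3 * M 2 2 * M 3 1 * M 4 0 := by
  rw [det_succ_row_zero, Fin.sum_univ_five]
  simp only [det_fin_four', submatrix_apply, sa5_0_0, sa5_0_1, sa5_0_2, sa5_0_3, sa5_1_0, sa5_1_1, sa5_1_2, sa5_1_3, sa5_2_0, sa5_2_1, sa5_2_2, sa5_2_3, sa5_3_0, sa5_3_1, sa5_3_2, sa5_3_3, sa5_4_0, sa5_4_1, sa5_4_2, sa5_4_3, sc5_0, sc5_1, sc5_2, sc5_3, v5_0, v5_1, v5_2, v5_3, v5_4]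
  ring
end


set_option maxHeartbeats 1000000 in
theorem stmt8 (a₁ a₂ a₃ b₂ b₄ b₅ : ℝ)
    (ha₁ : a₁ ≠ 0) (ha₂ : a₂ ≠ 0) (ha₃ : a₃ ≠ 0) (hasum : a₁ + a₂ + a₃ = 0)
    (hb₂ : b₂ ≠ 0) (hb₄ : b₄ ≠ 0) (hb₅ : b₅ ≠ 0) (hbsum : b₂ + b₄ + b₅ = 0)
    (A B : Matrix (Fin 5) (Fin 5) ℝ)
    (hA : A = !![a₁ ^ 2, -(a₁ * a₂), -(a₁ * a₃), -(a₁ * a₃), 0;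
                 -(a₁ * a₂), a₂ ^ 2, -(a₂ * a₃), -(a₂ * a₃), 0;
                 -(a₁ * a₃), -(a₂ * a₃), a₃ ^ 2, a₃ ^ 2, 0;
                 -(a₁ * a₃), -(a₂ * a₃), a₃ ^ 2, a₃ ^ 2, 0;
                 0, 0, 0, 0, 0])
    (hB : B = !![0, 0, 0, 0, 0;
                 0, b₂ ^ 2, b₂ ^ 2, -(b₂ * b₄), -(b₂ * b₅);
                 0, b₂ ^ 2, b₂ ^ 2, -(b₂ * b₄), -(b₂ * b₅);
                 0, -(b₂ * b₄), -(b₂ * b₄), b₄ ^ 2, -(b₄ * b₅);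
                 0, -(b₂ * b₅), -(b₂ * b₅), -(b₄ * b₅), b₅ ^ 2]) :
    (∀ t : ℝ, 0 < t →
      (t • A + t⁻¹ • B).det =
        -16 * a₁ ^ 2 * a₂ * a₃ * b₂ * b₄ * b₅ ^ 2 * (a₂ * a₃ * t + b₂ * b₄ / t)) ∧
    (∀ t : ℝ, 0 < t → t ^ 2 ≠ -(b₂ * b₄) / (a₂ * a₃) →
      (t • A + t⁻¹ • B).det ≠ 0) ∧
    (∃ s t : ℝ, 0 < s ∧ 0 < t ∧
      (s • A + s⁻¹ • B).det ≠ (t • A + t⁻¹ • B).det) := by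
  have key : ∀ t : ℝ, 0 < t →
      (t • A + t⁻¹ • B).det =
        -16 * a₁ ^ 2 * a₂ * a₃ * b₂ * b₄ * b₅ ^ 2 * (a₂ * a₃ * t + b₂ * b₄ / t) := by
    intro t ht
    have ht' : t ≠ 0 := ne_of_gt ht
    have h1 : a₁ = -a₂ - a₃ := by linarith
    have h5 : b₅ = -b₂ - b₄ := by linarith
    subst hA hB h1 h5
    rw [det_fin_five']
    simp only [Matrix.add_apply, Matrix.smul_apply, smul_eq_mul, Matrix.of_apply,
      Matrix.cons_val_zero, Matrix.cons_val_one, Matrix.cons_val_two, Matrix.cons_val_three,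
      Matrix.cons_val_four, Matrix.head_cons, Matrix.tail_cons]
    have hinv : t * t⁻¹ = 1 := mul_inv_cancel₀ ht'
    linear_combination (-16*a₂*a₃^3*b₂^2*b₄^4*t⁻¹ - 16*a₂*a₃^3*b₂^2*b₄^4*t*t⁻¹^2 - 32*a₂*a₃^3*b₂^3*b₄^3*t⁻¹ - 32*a₂*a₃^3*b₂^3*b₄^3*t*t⁻¹^2 - 16*a₂*a₃^3*b₂^4*b₄^2*t⁻¹ - 16*a₂*a₃^3*b₂^4*b₄^2*t*t⁻¹^2 - 32*a₂^2*a₃^2*b₂^2*b₄^4*t⁻¹ - 32*a₂^2*a₃^2*b₂^2*b₄^4*t*t⁻¹^2 - 64*a₂^2*a₃^2*b₂^3*b₄^3*t⁻¹ - 64*a₂^2*a₃^2*b₂^3*b₄^3*t*t⁻¹^2 - 32*a₂^2*a₃^2*b₂^4*b₄^2*t⁻¹ - 32*a₂^2*a₃^2*b₂^4*b₄^2*t*t⁻¹^2 - 16*a₂^2*a₃^4*b₂*b₄^3*t - 16*a₂^2*a₃^4*b₂*b₄^3*t^2*t⁻¹ - 32*a₂^2*a₃^4*b₂^2*b₄^2*t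 - 32*a₂^2*a₃^4*b₂^2*b₄^2*t^2*t⁻¹ - 16*a₂^2*a₃^4*b₂^3*b₄*t - 16*a₂^2*a₃^4*b₂^3*b₄*t^2*t⁻¹ - 16*a₂^3*a₃*b₂^2*b₄^4*t⁻¹ - 16*a₂^3*a₃*b₂^2*b₄^4*t*t⁻¹^2 - 32*a₂^3*a₃*b₂^3*b₄^3*t⁻¹ - 32*a₂^3*a₃*b₂^3*b₄^3*t*t⁻¹^2 - 16*a₂^3*a₃*b₂^4*b₄^2*t⁻¹ - 16*a₂^3*a₃*b₂^4*b₄^2*t*t⁻¹^2 - 32*a₂^3*a₃^3*b₂*b₄^3*t - 32*a₂^3*a₃^3*b₂*b₄^3*t^2*t⁻¹ - 64*a₂^3*a₃^3*b₂^2*b₄^2*t - 64*a₂^3*a₃^3*b₂^2*b₄^2*t^2*t⁻¹ - 32*a₂^3*a₃^3*b₂^3*b₄*t - 32*a₂^3*a₃^3*b₂^3*b₄*t^2*t⁻¹ - 16*a₂^4*a₃^2*b₂*b₄^3*t - 16*a₂^4*a₃^2*b₂*b₄^3*t^2*t⁻¹ - 32*a₂^4*a₃^2*b₂^2*b₄^2*t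 - 32*a₂^4*a₃^2*b₂^2*b₄^2*t^2*t⁻¹ - 16*a₂^4*a₃^2*b₂^3*b₄*t - 16*a₂^4*a₃^2*b₂^3*b₄*t^2*t⁻¹) * hinv
  refine ⟨key, ?_, ?_⟩
  · intro t ht hne
    rw [key t ht]
    have ht' : t ≠ 0 := ne_of_gt ht
    have hC : -16 * a₁ ^ 2 * a₂ * a₃ * b₂ * b₄ * b₅ ^ 2 ≠ 0 := by
      simp [ha₁, ha₂, ha₃, hb₂, hb₄, hb₅, pow_eq_zero_iff]
    refine mul_ne_zero hC ?_
    intro h0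
    apply hne
    have ha : a₂ * a₃ ≠ 0 := mul_ne_zero ha₂ ha₃
    field_simp at h0 ⊢
    nlinarith [h0]
  · by_cases hcase : 2 * (a₂ * a₃) = b₂ * b₄
    · refine ⟨1, 3, one_pos, by norm_num, ?_⟩
      rw [key 1 one_pos, key 3 (by norm_num)]
      intro h
      have hC : -16 * a₁ ^ 2 * a₂ * a₃ * b₂ * b₄ * b₅ ^ 2 ≠ 0 := by
        simp [ha₁, ha₂, ha₃, hb₂, hb₄, hb₅, pow_eq_zero_iff]
      have h2 : a₂ * a₃ * 1 + b₂ * b₄ / 1 = a₂ * a₃ * 3 + b₂ * b₄ / 3 :=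
        mul_left_cancel₀ hC h
      have : a₂ * a₃ = 0 := by linarith
      exact mul_ne_zero ha₂ ha₃ this
    · refine ⟨1, 2, one_pos, by norm_num, ?_⟩
      rw [key 1 one_pos, key 2 (by norm_num)]
      intro h
      have hC : -16 * a₁ ^ 2 * a₂ * a₃ * b₂ * b₄ * b₅ ^ 2 ≠ 0 := by
        simp [ha₁, ha₂, ha₃, hb₂, hb₄, hb₅, pow_eq_zero_iff]
      have h2 : a₂ * a₃ * 1 + b₂ * b₄ / 1 = a₂ * a₃ * 2 + b₂ * b₄ / 2 :=
        mul_left_cancel₀ hC h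
      apply hcase
      linarith
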